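/- arXiv:2605.11579 — 3 statements merged into one kernel-verified Lean document; each statement's English description precedes it below -/
import Mathlib

section
/- In the Ariki–Koike algebra H_{n,r}(R,q,Q), the image of every symmetric polynomial evaluated at the Jucys–Murphy generators is central: for every polynomial f ∈ R[x_1,…,x_n] invariant under all permutations of the variables x_1,…,x_n, the element f(L_1,…,L_n) commutes with every element of H_{n,r}(R,q,Q) (equivalently, it commutes with all the generators T_1,…,T_{n−1}, L_1,…,L_n). -/
namespace ArikiKoike

/-- Generators of the Ariki–Koike algebra `H_{n,r}(R, q, Q)`: `T i` for
`i ∈ {1, …, n-1}` (zero-indexed by `Fin (n-1)`) and `L j` for `j ∈ {1, …, n}`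
(zero-indexed by `Fin n`). -/
inductive Gen (n : ℕ) : Type
  | T : Fin (n - 1) → Gen n
  | L : Fin n → Gen n

variable (R : Type*) [CommRing R] (n r : ℕ) (q : R) (Q : Fin r → R)

/-- The generator `T_i` inside the free `R`-algebra. -/
noncomputable def Tf (i : Fin (n - 1)) : FreeAlgebra R (Gen n) :=
  FreeAlgebra.ι R (Gen.T i)

/-- The generator `L_j` inside the free `R`-algebra. -/
noncomputable def Lf (j : Fin n) : FreeAlgebra R (Gen n) :=
  FreeAlgebra.ι R (Gen.L j)

/-- The defining relations of the Ariki–Koike algebra `H_{n,r}(R, q, Q)`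
(cf. Ariki–Koike, Definition 3.1). All indices are zero-indexed, so `T i`
corresponds to `T_{i+1}` and `L j` to `L_{j+1}` of the one-indexed presentation. -/
inductive Rel : FreeAlgebra R (Gen n) → FreeAlgebra R (Gen n) → Prop
  /-- `T_i T_j = T_j T_i` whenever `|i - j| > 1`. -/
  | TTfar (i j : Fin (n - 1)) (h : (i : ℕ) + 1 < j ∨ (j : ℕ) + 1 < i) :
      Rel (Tf R n i * Tf R n j) (Tf R n j * Tf R n i)
  /-- `L_i L_j = L_j L_i` for all `i, j`. -/
  | LL (i j : Fin n) : Rel (Lf R n i * Lf R n j) (Lf R n j * Lf R n i)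
  /-- `T_i L_j = L_j T_i` whenever `j ∉ {i, i+1}`. -/
  | TL (i : Fin (n - 1)) (j : Fin n) (h₁ : (j : ℕ) ≠ i) (h₂ : (j : ℕ) ≠ (i : ℕ) + 1) :
      Rel (Tf R n i * Lf R n j) (Lf R n j * Tf R n i)
  /-- The braid relation `T_i T_{i+1} T_i = T_{i+1} T_i T_{i+1}`. -/
  | braid (i j : Fin (n - 1)) (h : (j : ℕ) = (i : ℕ) + 1) :
      Rel (Tf R n i * Tf R n j * Tf R n i) (Tf R n j * Tf R n i * Tf R n j)
  /-- The quadratic relation `(T_i + 1)(T_i - q) = 0`. -/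
  | quad (i : Fin (n - 1)) :
      Rel ((Tf R n i + 1) * (Tf R n i - algebraMap R (FreeAlgebra R (Gen n)) q)) 0
  /-- `q L_{i+1} = T_i L_i T_i`. -/
  | qL (i : Fin (n - 1)) (j j' : Fin n) (hj : (j : ℕ) = i) (hj' : (j' : ℕ) = (i : ℕ) + 1) :
      Rel (algebraMap R (FreeAlgebra R (Gen n)) q * Lf R n j')
        (Tf R n i * Lf R n j * Tf R n i)
  /-- The cyclotomic relation `∏_{i=1}^{r} (L_1 - Q_i) = 0`. -/
  | cyc (j : Fin n) (hj : (j : ℕ) = 0) :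
      Rel (((List.finRange r).map fun i =>
          Lf R n j - algebraMap R (FreeAlgebra R (Gen n)) (Q i)).prod) 0

/-- The Ariki–Koike algebra `H_{n,r}(R, q, Q)`: the quotient of the free associative
`R`-algebra on the generators `T_1, …, T_{n-1}, L_1, …, L_n` by the two-sided ideal
generated by the defining relations. -/
abbrev ArikiKoikeAlgebra : Type _ := RingQuot (Rel R n r q Q)

/-- The generator `T_i` of the Ariki–Koike algebra. -/
noncomputable def T (i : Fin (n - 1)) : ArikiKoikeAlgebra R n r q Q :=
  RingQuot.mkAlgHom R (Rel R n r q Q) (Tf R n i)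

/-- The Jucys–Murphy generator `L_j` of the Ariki–Koike algebra. -/
noncomputable def L (j : Fin n) : ArikiKoikeAlgebra R n r q Q :=
  RingQuot.mkAlgHom R (Rel R n r q Q) (Lf R n j)

/-- The evaluation of a polynomial `f ∈ R[x_1, …, x_n]` at the Jucys–Murphy elements
`L_1, …, L_n`: `f(L_1, …, L_n) = Σ_m f_m · L_1^{m 1} ⋯ L_n^{m n}` (the `L_j` pairwise
commute, so the order of the factors is immaterial). -/
noncomputable def evalJM (f : MvPolynomial (Fin n) R) : ArikiKoikeAlgebra R n r q Q :=
  ∑ m ∈ f.support, algebraMap R (ArikiKoikeAlgebra R n r q Q) (MvPolynomial.coeff m f) *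
    ((List.finRange n).map fun j => L R n r q Q j ^ m j).prod



section Abstract

variable {A : Type*} [Ring A] {t x y u : A}

lemma ak_ty (hu : IsUnit u) (hcu : ∀ a : A, Commute u a)
    (hq2 : t * t = u * t + u - t) (hL : u * y = t * x * t) :
    t * y = x * t + u * y - y := by
  apply hu.mul_left_cancel
  have e1 : u * (t * y) = t * t * x * t := by
    rw [← mul_assoc, (hcu t).eq, mul_assoc, hL]; noncomm_ring
  have e2 : t * t * x * t = u * (t * x * t) + u * (x * t) - t * x * t := by
    rw [hq2]; noncomm_ring
  rw [e1, e2, ← hL]; noncomm_ring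

lemma ak_tx (hu : IsUnit u) (hcu : ∀ a : A, Commute u a)
    (hq2 : t * t = u * t + u - t) (hL : u * y = t * x * t) :
    t * x = y * t - u * y + y := by
  have hxu : t * (x * u) = u * (t * x) := by
    rw [← (hcu x).eq, ← mul_assoc, ← (hcu t).eq, mul_assoc]
  have key : y * t = x * t + u * y - y - x * t + t * x := by
    apply hu.mul_left_cancel
    have e1 : u * (y * t) = t * x * (t * t) := by
      rw [← mul_assoc, hL]; noncomm_ring
    have e2 : t * x * (t * t) = u * (t * x * t) + u * (t * x) - t * x * t := by
      have h3 : t * x * (u * t) = u * (t * x * t) := by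
        rw [show t * x * (u * t) = t * (x * u) * t by noncomm_ring, hxu, mul_assoc,
          mul_assoc, ← mul_assoc]
      have h4 : t * x * u = u * (t * x) := by rw [mul_assoc, hxu]
      rw [hq2, mul_sub, mul_add, h3, h4]
    rw [e1, e2, ← hL]; noncomm_ring
  rw [key]; noncomm_ring

lemma ak_te1 (hu : IsUnit u) (hcu : ∀ a : A, Commute u a)
    (hq2 : t * t = u * t + u - t) (hL : u * y = t * x * t) :
    Commute t (x + y) := by
  show t * (x + y) = (x + y) * t
  rw [mul_add, ak_tx hu hcu hq2 hL, ak_ty hu hcu hq2 hL]; noncomm_ring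

lemma ak_te2 (hu : IsUnit u) (hcu : ∀ a : A, Commute u a)
    (hq2 : t * t = u * t + u - t) (hL : u * y = t * x * t)
    (hxy : Commute x y) : Commute t (x * y) := by
  show t * (x * y) = (x * y) * t
  have h1 : t * (x * y) = (y * t - u * y + y) * y := by
    rw [← mul_assoc, ak_tx hu hcu hq2 hL]
  rw [h1, add_mul, sub_mul, mul_assoc, ak_ty hu hcu hq2 hL]
  have h2 : y * (x * t + u * y - y) - u * y * y + y * y
      = y * x * t + (y * (u * y) - u * y * y) := by noncomm_ring
  rw [h2, ← hxy.eq, show y * (u * y) = u * y * y by rw [← mul_assoc, ← (hcu y).eq]]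
  noncomm_ring

lemma ak_tp (hu : IsUnit u) (hcu : ∀ a : A, Commute u a)
    (hq2 : t * t = u * t + u - t) (hL : u * y = t * x * t)
    (hxy : Commute x y) : ∀ a : ℕ, Commute t (x ^ a + y ^ a) := by
  intro a
  induction a using Nat.strong_induction_on with
  | _ a ih =>
    match a with
    | 0 => simpa using (Commute.one_right t).add_right (Commute.one_right t)
    | 1 => simpa using ak_te1 hu hcu hq2 hL
    | (a + 2) =>
      have c1 : Commute t ((x + y) * (x ^ (a + 1) + y ^ (a + 1))) :=
        (ak_te1 hu hcu hq2 hL).mul_right (ih (a + 1) (by omega))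
      have c2 : Commute t (x * y * (x ^ a + y ^ a)) :=
        (ak_te2 hu hcu hq2 hL hxy).mul_right (ih a (by omega))
      have h1 : y * x ^ (a + 1) = x * y * x ^ a := by
        rw [pow_succ' x a, ← mul_assoc, ← hxy.eq]
      have h2 : x * y ^ (a + 1) = x * y * y ^ a := by
        rw [pow_succ' y a, ← mul_assoc]
      have hid : (x + y) * (x ^ (a + 1) + y ^ (a + 1)) - x * y * (x ^ a + y ^ a)
          = x ^ (a + 2) + y ^ (a + 2) := by
        rw [add_mul, mul_add, mul_add, h1, h2, mul_add,
          ← pow_succ' x (a + 1), ← pow_succ' y (a + 1)]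
        abel
      exact hid ▸ c1.sub_right c2

lemma ak_tm_le (hu : IsUnit u) (hcu : ∀ a : A, Commute u a)
    (hq2 : t * t = u * t + u - t) (hL : u * y = t * x * t)
    (hxy : Commute x y) {a b : ℕ} (h : b ≤ a) :
    Commute t (x ^ a * y ^ b + x ^ b * y ^ a) := by
  have hfac : x ^ a * y ^ b + x ^ b * y ^ a
      = (x * y) ^ b * (x ^ (a - b) + y ^ (a - b)) := by
    rw [hxy.mul_pow, mul_add]
    congr 1
    · rw [mul_assoc, (hxy.symm.pow_pow b (a - b)).eq, ← mul_assoc, ← pow_add,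
        Nat.add_sub_cancel' h]
    · rw [mul_assoc, ← pow_add, Nat.add_sub_cancel' h]
  exact hfac ▸ (((ak_te2 hu hcu hq2 hL hxy).pow_right b).mul_right
    (ak_tp hu hcu hq2 hL hxy (a - b)))

lemma ak_tm (hu : IsUnit u) (hcu : ∀ a : A, Commute u a)
    (hq2 : t * t = u * t + u - t) (hL : u * y = t * x * t)
    (hxy : Commute x y) (a b : ℕ) :
    Commute t (x ^ a * y ^ b + x ^ b * y ^ a) := by
  rcases le_total b a with h | h
  · exact ak_tm_le hu hcu hq2 hL hxy h
  · rw [add_comm]; exact ak_tm_le hu hcu hq2 hL hxy h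

lemma ak_td (hu : IsUnit u) (hcu : ∀ a : A, Commute u a)
    (hq2 : t * t = u * t + u - t) (hL : u * y = t * x * t)
    (hxy : Commute x y) (a : ℕ) : Commute t (x ^ a * y ^ a) :=
  hxy.mul_pow a ▸ (ak_te2 hu hcu hq2 hL hxy).pow_right a

end Abstract

section ListLemma

variable {M : Type*} [Monoid M] {ι : Type*} [DecidableEq ι]

lemma list_prod_update (l : List ι) (hl : l.Nodup) (d : ι → M) (k : ι) (hk : k ∈ l)
    (hc : ∀ a ∈ l, Commute (d a) (d k)) :
    (l.map d).prod = d k * (l.map (Function.update d k 1)).prod := by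
  induction l with
  | nil => simp at hk
  | cons a l ih =>
    rcases List.mem_cons.mp hk with rfl | hk'
    · have ha : k ∉ l := (List.nodup_cons.mp hl).1
      simp only [List.map_cons, List.prod_cons, Function.update_self, one_mul]
      exact congrArg (d k * ·) (congrArg List.prod (List.map_congr_left fun b hb =>
        (Function.update_of_ne (ne_of_mem_of_not_mem hb ha) 1 d).symm))
    · have ha : a ≠ k := by rintro rfl; exact (List.nodup_cons.mp hl).1 hk'
      simp only [List.map_cons, List.prod_cons, Function.update_of_ne ha]
      rw [ih (List.nodup_cons.mp hl).2 hk' (fun b hb => hc b (List.mem_cons_of_mem a hb)),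
        ← mul_assoc, ← mul_assoc, (hc a List.mem_cons_self).eq]

end ListLemma

section AKLemmas

variable (R : Type*) [CommRing R] (n r : ℕ) (q : R) (Q : Fin r → R)

lemma L_commute (j k : Fin n) : Commute (L R n r q Q j) (L R n r q Q k) := by
  show _ * _ = _ * _
  simp only [L, ← map_mul]
  exact RingQuot.mkAlgHom_rel R (Rel.LL j k)

lemma T_L_commute (i : Fin (n - 1)) (j : Fin n) (h1 : (j : ℕ) ≠ i) (h2 : (j : ℕ) ≠ (i : ℕ) + 1) :
    Commute (T R n r q Q i) (L R n r q Q j) := by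
  show _ * _ = _ * _
  simp only [T, L, ← map_mul]
  exact RingQuot.mkAlgHom_rel R (Rel.TL i j h1 h2)

lemma ak_quad_form {A : Type*} [Ring A] {t u : A} (hc : t * u = u * t)
    (h : (t + 1) * (t - u) = 0) : t * t = u * t + u - t := by
  have h2 : t * t - t * u + t - u = 0 := by rw [← h]; noncomm_ring
  rw [hc] at h2
  rw [← sub_eq_zero, show t * t - (u * t + u - t) = t * t - u * t + t - u from by noncomm_ring]
  exact h2

lemma T_quad (i : Fin (n - 1)) :
    T R n r q Q i * T R n r q Q i
      = algebraMap R (ArikiKoikeAlgebra R n r q Q) q * T R n r q Q i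
        + algebraMap R (ArikiKoikeAlgebra R n r q Q) q - T R n r q Q i := by
  have h := RingQuot.mkAlgHom_rel R (Rel.quad (R := R) (n := n) (r := r) (q := q) (Q := Q) i)
  rw [map_mul, map_add, map_sub, map_one, map_zero, AlgHom.commutes] at h
  exact ak_quad_form (Algebra.commutes q _).symm h

lemma q_L_eq (i : Fin (n - 1)) (hi0 : (i : ℕ) < n) (hi1 : (i : ℕ) + 1 < n) :
    algebraMap R (ArikiKoikeAlgebra R n r q Q) q * L R n r q Q ⟨(i : ℕ) + 1, hi1⟩
      = T R n r q Q i * L R n r q Q ⟨(i : ℕ), hi0⟩ * T R n r q Q i := by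
  have h := RingQuot.mkAlgHom_rel R
    (Rel.qL (R := R) (n := n) (r := r) (q := q) (Q := Q) i ⟨(i : ℕ), hi0⟩ ⟨(i : ℕ) + 1, hi1⟩ rfl rfl)
  rw [map_mul, map_mul, map_mul, AlgHom.commutes] at h
  simpa only [T, L] using h

lemma evalJM_commute_L (f : MvPolynomial (Fin n) R) (k : Fin n) :
    Commute (evalJM R n r q Q f) (L R n r q Q k) := by
  apply Commute.sum_left
  intro m _
  refine Commute.mul_left (Algebra.commutes _ _) ?_
  refine ((Commute.list_prod_right _ _ ?_)).symm
  intro z hz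
  obtain ⟨j, -, rfl⟩ := List.mem_map.mp hz
  exact (L_commute R n r q Q k j).pow_right _

lemma evalJM_commute_T (hq : IsUnit q) (f : MvPolynomial (Fin n) R)
    (hf : ∀ σ : Equiv.Perm (Fin n), MvPolynomial.rename σ f = f) (i : Fin (n - 1)) :
    evalJM R n r q Q f * T R n r q Q i = T R n r q Q i * evalJM R n r q Q f := by
  classical
  have hi0 : (i : ℕ) < n := by have := i.isLt; omega
  have hi1 : (i : ℕ) + 1 < n := by have := i.isLt; omega
  set A := ArikiKoikeAlgebra R n r q Q with hA
  set t := T R n r q Q i with htdef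
  set i0 : Fin n := ⟨(i : ℕ), hi0⟩ with hi0def
  set i1 : Fin n := ⟨(i : ℕ) + 1, hi1⟩ with hi1def
  set x := L R n r q Q i0 with hxdef
  set y := L R n r q Q i1 with hydef
  set u : A := algebraMap R A q with hudef
  have hu : IsUnit u := hq.map (algebraMap R A)
  have hcu : ∀ a : A, Commute u a := fun a => Algebra.commutes q a
  have hq2 : t * t = u * t + u - t := T_quad R n r q Q i
  have hLrel : u * y = t * x * t := q_L_eq R n r q Q i hi0 hi1
  have hxy : Commute x y := L_commute R n r q Q i0 i1
  have hne : i0 ≠ i1 := by simp [hi0def, hi1def, Fin.ext_iff]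
  set σ : Equiv.Perm (Fin n) := Equiv.swap i0 i1 with hσ
  have hσsymm : σ.symm = σ := by simp [hσ]
  have hσ0 : σ i0 = i1 := Equiv.swap_apply_left _ _
  have hσ1 : σ i1 = i0 := Equiv.swap_apply_right _ _
  have hcoeff : ∀ m : Fin n →₀ ℕ, f.coeff (Finsupp.mapDomain σ m) = f.coeff m := by
    intro m
    conv_lhs => rw [← hf σ]
    exact MvPolynomial.coeff_rename_mapDomain σ σ.injective f m
  have hm0 : ∀ m : Fin n →₀ ℕ, (Finsupp.mapDomain (⇑σ) m) i0 = m i1 := by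
    intro m
    rw [show (⇑σ) = ⇑(σ : Equiv.Perm (Fin n)) from rfl, Finsupp.mapDomain_equiv_apply, hσsymm, hσ0]
  have hm1 : ∀ m : Fin n →₀ ℕ, (Finsupp.mapDomain (⇑σ) m) i1 = m i0 := by
    intro m
    rw [Finsupp.mapDomain_equiv_apply, hσsymm, hσ1]
  have hmo : ∀ (m : Fin n →₀ ℕ) (j : Fin n), j ≠ i0 → j ≠ i1 →
      (Finsupp.mapDomain (⇑σ) m) j = m j := by
    intro m j h0 h1
    rw [Finsupp.mapDomain_equiv_apply, hσsymm, hσ, Equiv.swap_apply_of_ne_of_ne h0 h1]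
  -- the residual product
  set D : (Fin n →₀ ℕ) → A := fun m =>
    ((List.finRange n).map (Function.update (Function.update
      (fun j => L R n r q Q j ^ m j) i0 1) i1 1)).prod with hDdef
  have key : ∀ m : Fin n →₀ ℕ,
      ((List.finRange n).map fun j => L R n r q Q j ^ m j).prod
        = x ^ m i0 * (y ^ m i1 * D m) := by
    intro m
    set d : Fin n → A := fun j => L R n r q Q j ^ m j with hd
    have h1 := list_prod_update (List.finRange n) (List.nodup_finRange n) d i0
      (List.mem_finRange i0)
      (fun a _ => (L_commute R n r q Q a i0).pow_pow _ _)
    have hcomm' : ∀ a ∈ List.finRange n,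
        Commute (Function.update d i0 1 a) (Function.update d i0 1 i1) := by
      intro a _
      rcases eq_or_ne a i0 with rfl | h0
      · rw [Function.update_self]; exact Commute.one_left _
      rw [Function.update_of_ne h0, Function.update_of_ne hne.symm]
      exact (L_commute R n r q Q a i1).pow_pow _ _
    have h2 := list_prod_update (List.finRange n) (List.nodup_finRange n)
      (Function.update d i0 1) i1 (List.mem_finRange i1) hcomm'
    rw [h1, h2, Function.update_of_ne hne.symm]
  have hDσ : ∀ m : Fin n →₀ ℕ, D (Finsupp.mapDomain σ m) = D m := by
    intro m
    simp only [hDdef]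
    congr 1
    apply List.map_congr_left
    intro j _
    rcases eq_or_ne j i1 with rfl | h1
    · rw [Function.update_self, Function.update_self]
    rcases eq_or_ne j i0 with rfl | h0
    · rw [Function.update_of_ne h1, Function.update_of_ne h1,
        Function.update_self, Function.update_self]
    · rw [Function.update_of_ne h1, Function.update_of_ne h1,
        Function.update_of_ne h0, Function.update_of_ne h0, hmo m j h0 h1]
  have hDt : ∀ m : Fin n →₀ ℕ, Commute t (D m) := by
    intro m
    apply Commute.list_prod_right
    intro z hz
    obtain ⟨j, -, rfl⟩ := List.mem_map.mp hz
    rcases eq_or_ne j i1 with rfl | h1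
    · rw [Function.update_self]; exact Commute.one_right _
    rcases eq_or_ne j i0 with rfl | h0
    · rw [Function.update_of_ne h1, Function.update_self]; exact Commute.one_right _
    · rw [Function.update_of_ne h1, Function.update_of_ne h0]
      have hv0 : (j : ℕ) ≠ (i : ℕ) := fun h => h0 (Fin.ext h)
      have hv1 : (j : ℕ) ≠ (i : ℕ) + 1 := fun h => h1 (Fin.ext h)
      exact (T_L_commute R n r q Q i j hv0 hv1).pow_right _
  rw [← sub_eq_zero]
  simp only [evalJM]
  rw [Finset.sum_mul, Finset.mul_sum, ← Finset.sum_sub_distrib]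
  apply Finset.sum_involution (fun m _ => Finsupp.mapDomain σ m)
  · -- pairs sum to zero
    intro m hm
    set Cc := algebraMap R A (MvPolynomial.coeff m f) with hCc
    have hc2 : algebraMap R A (MvPolynomial.coeff (Finsupp.mapDomain σ m) f) = Cc := by
      rw [hcoeff m]
    rw [hc2]
    set Pm := ((List.finRange n).map fun j => L R n r q Q j ^ m j).prod with hPm
    set Pτ := ((List.finRange n).map fun j =>
      L R n r q Q j ^ (Finsupp.mapDomain σ m) j).prod with hPτ
    have hAc : Commute t (Pm + Pτ) := by
      rw [hPm, hPτ, key m, key (Finsupp.mapDomain σ m), hm0 m, hm1 m, hDσ m]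
      rw [show x ^ m i0 * (y ^ m i1 * D m) + x ^ m i1 * (y ^ m i0 * D m)
          = (x ^ m i0 * y ^ m i1 + x ^ m i1 * y ^ m i0) * D m from by noncomm_ring]
      exact (ak_tm hu hcu hq2 hLrel hxy _ _).mul_right (hDt m)
    have h5 : t * (Cc * Pm) = Cc * (t * Pm) := by
      rw [← mul_assoc, ← Algebra.commutes (MvPolynomial.coeff m f) t, mul_assoc]
    have h6 : t * (Cc * Pτ) = Cc * (t * Pτ) := by
      rw [← mul_assoc, ← Algebra.commutes (MvPolynomial.coeff m f) t, mul_assoc]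
    rw [show Cc * Pm * t - t * (Cc * Pm) + (Cc * Pτ * t - t * (Cc * Pτ))
        = Cc * ((Pm + Pτ) * t) - (t * (Cc * Pm) + t * (Cc * Pτ)) from by noncomm_ring,
      h5, h6, show Cc * (t * Pm) + Cc * (t * Pτ) = Cc * (t * (Pm + Pτ)) from by noncomm_ring,
      ← hAc.eq, sub_self]
  · -- fixed points vanish
    intro m hm hne0 heq
    apply hne0
    have hmm : m i1 = m i0 := by rw [← hm0 m, heq]
    set Cc := algebraMap R A (MvPolynomial.coeff m f) with hCc
    set Pm := ((List.finRange n).map fun j => L R n r q Q j ^ m j).prod with hPm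
    have hPt : Commute t Pm := by
      rw [hPm, key m, ← mul_assoc]
      have hxx : Commute t (x ^ m i0 * y ^ m i1) := by
        rw [hmm]
        exact ak_td hu hcu hq2 hLrel hxy (m i0)
      exact hxx.mul_right (hDt m)
    have h5 : t * (Cc * Pm) = Cc * (t * Pm) := by
      rw [← mul_assoc, ← Algebra.commutes (MvPolynomial.coeff m f) t, mul_assoc]
    rw [h5, mul_assoc, ← hPt.eq, sub_self]
  · -- maps support to support
    intro m hm
    rw [MvPolynomial.mem_support_iff] at hm ⊢
    rw [hcoeff m]
    exact hm
  · -- involution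
    intro m hm
    rw [← Finsupp.mapDomain_comp]
    rw [show (⇑σ ∘ ⇑σ) = id from funext fun j => Equiv.swap_apply_self _ _ _]
    exact Finsupp.mapDomain_id

end AKLemmas

/-- In the Ariki–Koike algebra `H_{n,r}(R, q, Q)`, the image of every symmetric
polynomial evaluated at the Jucys–Murphy generators is central: if
`f ∈ R[x_1, …, x_n]` is invariant under all permutations of the variables, then
`f(L_1, …, L_n)` commutes with every element of `H_{n,r}(R, q, Q)`. -/
theorem evalJM_symmetric_central (hq : IsUnit q) (f : MvPolynomial (Fin n) R)
    (hf : ∀ σ : Equiv.Perm (Fin n), MvPolynomial.rename σ f = f)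
    (x : ArikiKoikeAlgebra R n r q Q) :
    evalJM R n r q Q f * x = x * evalJM R n r q Q f := by
  obtain ⟨w, rfl⟩ := RingQuot.mkAlgHom_surjective R (Rel R n r q Q) x
  induction w using FreeAlgebra.induction with
  | grade0 a =>
    rw [AlgHom.commutes]
    exact (Algebra.commutes a (evalJM R n r q Q f)).symm
  | grade1 g =>
    cases g with
    | T i => exact evalJM_commute_T R n r q Q hq f hf i
    | L j => exact (evalJM_commute_L R n r q Q f j).eq
  | mul a b iha ihb =>
    rw [map_mul, ← mul_assoc, iha, mul_assoc, ihb, ← mul_assoc]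
  | add a b iha ihb =>
    rw [map_add, mul_add, add_mul, iha, ihb]

end ArikiKoike
end

section
/- A Young diagram is uniquely determined by the multiset of contents of its cells: if μ and ν are Young diagrams such that the multiset {j − i : (i,j) a cell of μ} equals the multiset {j − i : (i,j) a cell of ν}, then μ = ν. -/
/-- The multiset of contents of the cells of a Young diagram: the cell `(i, j)`
(row `i`, column `j`, zero-indexed) has content `j - i ∈ ℤ`. -/
def YoungDiagram.contentMultiset (μ : YoungDiagram) : Multiset ℤ :=
  μ.cells.val.map fun c => (c.2 : ℤ) - (c.1 : ℤ)

private lemma initseg (S : Finset ℕ) (h : ∀ i j, i ≤ j → j ∈ S → i ∈ S) (i : ℕ) :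
    i ∈ S ↔ i < S.card := by
  constructor
  · intro hi
    have hsub : Finset.range (i + 1) ⊆ S := fun x hx =>
      h x i (Nat.lt_succ_iff.mp (Finset.mem_range.mp hx)) hi
    have := Finset.card_le_card hsub
    simpa using this
  · intro hi
    by_contra hs
    have hsub : S ⊆ Finset.range i := by
      intro j hj
      rw [Finset.mem_range]
      by_contra hji
      exact hs (h i j (le_of_not_gt hji) hj)
    have := Finset.card_le_card hsub
    simp at this; omega

private def dcard (μ : YoungDiagram) (k : ℤ) : ℕ :=
  (μ.cells.filter fun c => (c.2 : ℤ) - (c.1 : ℤ) = k).card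

private lemma count_content (μ : YoungDiagram) (k : ℤ) :
    μ.contentMultiset.count k = dcard μ k := by
  simp [YoungDiagram.contentMultiset, dcard, Multiset.count_map, Finset.card,
    Finset.filter, eq_comm]

private lemma mem_iff_dcard (μ : YoungDiagram) (i j : ℕ) :
    (i, j) ∈ μ ↔ min i j < dcard μ ((j : ℤ) - (i : ℤ)) := by
  set k := (j : ℤ) - (i : ℤ) with hk
  set F := μ.cells.filter (fun c => (c.2 : ℤ) - (c.1 : ℤ) = k) with hF
  set S := F.image (fun c => min c.1 c.2) with hS
  have hcard : S.card = F.card := by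
    apply Finset.card_image_of_injOn
    intro a ha b hb hab
    simp only [hF, Finset.mem_coe, Finset.mem_filter] at ha hb
    have ha2 := ha.2; have hb2 := hb.2
    have hm : (min (a.1 : ℤ) (a.2 : ℤ)) = min (b.1 : ℤ) (b.2 : ℤ) := by
      have : ((min a.1 a.2 : ℕ) : ℤ) = ((min b.1 b.2 : ℕ) : ℤ) := by exact_mod_cast hab
      push_cast at this; exact this
    have h1 : a.1 = b.1 := by omega
    have h2 : a.2 = b.2 := by omega
    exact Prod.ext h1 h2
  have hdown : ∀ t' t : ℕ, t' ≤ t → t ∈ S → t' ∈ S := by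
    intro t' t htt ht
    rw [hS, Finset.mem_image] at ht ⊢
    obtain ⟨c, hc, hct⟩ := ht
    rw [hF, Finset.mem_filter] at hc
    set d := t - t' with hd
    have hdmin : d ≤ min c.1 c.2 := by omega
    refine ⟨(c.1 - d, c.2 - d), ?_, ?_⟩
    · rw [hF, Finset.mem_filter, YoungDiagram.mem_cells]
      constructor
      · exact μ.up_left_mem (Nat.sub_le _ _) (Nat.sub_le _ _) (by simpa using hc.1)
      · have hc2 := hc.2
        push_cast [Nat.cast_sub (by omega : d ≤ c.1), Nat.cast_sub (by omega : d ≤ c.2)]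
        omega
    · simp only
      omega
  have hmemS : (i, j) ∈ μ ↔ min i j ∈ S := by
    constructor
    · intro hij
      rw [hS, Finset.mem_image]
      exact ⟨(i, j), by rw [hF, Finset.mem_filter, YoungDiagram.mem_cells]; exact ⟨hij, rfl⟩, rfl⟩
    · intro hm
      rw [hS, Finset.mem_image] at hm
      obtain ⟨c, hc, hct⟩ := hm
      rw [hF, Finset.mem_filter] at hc
      have hc2 := hc.2
      have hmm : (min (c.1 : ℤ) (c.2 : ℤ)) = min (i : ℤ) (j : ℤ) := by
        have : ((min c.1 c.2 : ℕ) : ℤ) = ((min i j : ℕ) : ℤ) := by exact_mod_cast hct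
        push_cast at this; exact this
      have h1 : c.1 = i := by omega
      have h2 : c.2 = j := by omega
      have hcm : c ∈ μ := (YoungDiagram.mem_cells _).mp hc.1
      rwa [show ((i, j) : ℕ × ℕ) = c from Prod.ext h1.symm h2.symm]
  rw [hmemS, initseg S (fun a b => hdown a b), hcard]
  rfl

/-- A Young diagram is uniquely determined by the multiset of contents of its cells. -/
theorem youngDiagram_eq_of_contentMultiset_eq (μ ν : YoungDiagram)
    (h : μ.contentMultiset = ν.contentMultiset) : μ = ν := by
  have hd : ∀ k, dcard μ k = dcard ν k := fun k => by
    rw [← count_content, ← count_content, h]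
  apply YoungDiagram.ext
  ext ⟨i, j⟩
  rw [YoungDiagram.mem_cells, YoungDiagram.mem_cells, mem_iff_dcard, mem_iff_dcard, hd]
end

section
/- In the Laurent polynomial ring ℤ[q^{±1}, Q_1^{±1},…,Q_r^{±1}], the assignment sending an r-multipartition λ = (λ^(1),…,λ^(r)) to the multiset of monomials {q^{j−i}·Q_c : 1 ≤ c ≤ r, (i,j) a cell of λ^(c)} is injective: if two r-multipartitions give equal multisets of monomials, they are equal. -/
/-- The Laurent polynomial ring `ℤ[q^{±1}, Q_1^{±1}, …, Q_r^{±1}]` realized as the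
monoid algebra over `ℤ` of the free abelian group on `r + 1` generators
(`q` corresponds to the generator at index `0`, and `Q_c` to the one at index `c + 1`). -/
abbrev LaurentRing (r : ℕ) : Type := AddMonoidAlgebra ℤ (Fin (r + 1) →₀ ℤ)

/-- The monomial `q^{j - i} · Q_c` of `ℤ[q^{±1}, Q_1^{±1}, …, Q_r^{±1}]` attached to a
component index `c` and a cell `(i, j)` (of content `j - i`). -/
noncomputable def cellMonomial {r : ℕ} (c : Fin r) (p : ℕ × ℕ) : LaurentRing r :=
  AddMonoidAlgebra.single
    (Finsupp.single (0 : Fin (r + 1)) ((p.2 : ℤ) - (p.1 : ℤ)) + Finsupp.single c.succ 1) 1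

/-- The multiset of monomials `{q^{j-i} · Q_c : 1 ≤ c ≤ r, (i,j) a cell of λ^(c)}` in
`ℤ[q^{±1}, Q_1^{±1}, …, Q_r^{±1}]` attached to an `r`-multipartition
`λ = (λ^(1), …, λ^(r))` (an `r`-tuple of Young diagrams). -/
noncomputable def monomialMultiset {r : ℕ} (lam : Fin r → YoungDiagram) :
    Multiset (LaurentRing r) :=
  (Finset.univ.val : Multiset (Fin r)).bind fun c =>
    (lam c).cells.val.map fun p => cellMonomial c p

namespace MultipartitionAux

/-- The exponent of the monomial attached to component `c` and content `k`. -/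
noncomputable def expnt {r : ℕ} (ck : Fin r × ℤ) : (Fin (r + 1) →₀ ℤ) :=
  Finsupp.single (0 : Fin (r + 1)) ck.2 + Finsupp.single ck.1.succ 1

lemma expnt_injective {r : ℕ} : Function.Injective (expnt (r := r)) := by
  rintro ⟨c, k⟩ ⟨c', k'⟩ h
  simp only [expnt] at h
  have h1 := DFunLike.congr_fun h c.succ
  have h0 := DFunLike.congr_fun h (0 : Fin (r + 1))
  simp [Finsupp.single_apply, (Fin.succ_ne_zero c).symm, (Fin.succ_ne_zero c').symm,
    Fin.succ_ne_zero] at h1 h0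
  have hc : c' = c := by by_contra hne; simp [hne] at h1
  simp [hc, h0]

lemma singleExpnt_injective {r : ℕ} :
    Function.Injective (fun ck : Fin r × ℤ => (AddMonoidAlgebra.single (expnt ck) 1 : LaurentRing r)) :=
  fun _ _ hab => expnt_injective (AddMonoidAlgebra.single_left_injective one_ne_zero hab)

/-- The content of a cell. -/
def content (p : ℕ × ℕ) : ℤ := (p.2 : ℤ) - (p.1 : ℤ)

/-- Multiset of (component, content) pairs of a multipartition. -/
noncomputable def pairMS {r : ℕ} (lam : Fin r → YoungDiagram) : Multiset (Fin r × ℤ) :=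
  (Finset.univ.val : Multiset (Fin r)).bind fun c =>
    (lam c).cells.val.map fun p => (c, content p)

lemma monomialMultiset_eq_map {r : ℕ} (lam : Fin r → YoungDiagram) :
    monomialMultiset lam =
      (pairMS lam).map (fun ck => (AddMonoidAlgebra.single (expnt ck) 1 : LaurentRing r)) := by
  simp only [monomialMultiset, pairMS, Multiset.map_bind, Multiset.map_map]
  rfl

/-- Multiset of contents of a Young diagram. -/
def contentMS (Y : YoungDiagram) : Multiset ℤ := Y.cells.val.map content

lemma count_pairMS {r : ℕ} (lam : Fin r → YoungDiagram) (c : Fin r) (k : ℤ) :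
    Multiset.count (c, k) (pairMS lam) = Multiset.count k (contentMS (lam c)) := by
  rw [pairMS, Multiset.count_bind]
  have : ∀ c' : Fin r,
      Multiset.count (c, k) ((lam c').cells.val.map fun p => (c', content p)) =
        if c' = c then Multiset.count k (contentMS (lam c')) else 0 := by
    intro c'
    by_cases hc : c' = c
    · subst hc
      simp only [if_true, contentMS]
      have : ((lam c').cells.val.map fun p => (c', content p)) =
          ((lam c').cells.val.map content).map fun z => (c', z) := by
        rw [Multiset.map_map]; rfl
      rw [this, Multiset.count_map_eq_count' _ _ (fun _ _ hab => by simpa using hab)]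
    · simp only [if_neg hc]
      rw [Multiset.count_eq_zero]
      intro hmem
      obtain ⟨p, _, hp⟩ := Multiset.mem_map.mp hmem
      exact hc (congrArg Prod.fst hp)
  calc (Multiset.map (fun c' =>
        Multiset.count (c, k) ((lam c').cells.val.map fun p => (c', content p)))
          (Finset.univ.val : Multiset (Fin r))).sum
      = ∑ c' : Fin r, if c' = c then Multiset.count k (contentMS (lam c')) else 0 := by
        rw [Finset.sum]; congr 1; exact Multiset.map_congr rfl fun c' _ => this c'
    _ = Multiset.count k (contentMS (lam c)) := by rw [Finset.sum_ite_eq' Finset.univ c]; simp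

/-- The canonical cell of content `k` with min-coordinate `m`. -/
def cellOf (k : ℤ) (m : ℕ) : ℕ × ℕ := (m + (-k).toNat, m + k.toNat)

lemma content_cellOf (k : ℤ) (m : ℕ) : content (cellOf k m) = k := by
  simp only [content, cellOf]
  push_cast
  omega

lemma min_cellOf (k : ℤ) (m : ℕ) : min (cellOf k m).1 (cellOf k m).2 = m := by
  simp only [cellOf]
  omega

lemma cellOf_content_min (p : ℕ × ℕ) : cellOf (content p) (min p.1 p.2) = p := by
  obtain ⟨i, j⟩ := p
  simp only [cellOf, content]
  refine Prod.ext ?_ ?_ <;> simp <;> omega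

lemma count_contentMS (Y : YoungDiagram) (k : ℤ) :
    Multiset.count k (contentMS Y) = (Y.cells.filter (fun p => content p = k)).card := by
  rw [contentMS, Multiset.count_map]
  congr 1
  exact Multiset.filter_congr fun a _ => eq_comm

/-- Membership in a Young diagram is determined by content multiplicities. -/
lemma mem_iff_min_lt_count (Y : YoungDiagram) (i j : ℕ) :
    (i, j) ∈ Y ↔ min i j < Multiset.count (content (i, j)) (contentMS Y) := by
  rw [count_contentMS]
  constructor
  · intro hmem
    have hinj : Set.InjOn (cellOf (content (i, j)))
        ↑(Finset.range (min i j + 1)) := by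
      intro a _ b _ hab
      have := congrArg (fun p => min p.1 p.2) hab
      simpa [min_cellOf] using this
    have hle : (Finset.range (min i j + 1)).card ≤
        (Y.cells.filter (fun p => content p = content (i, j))).card := by
      apply Finset.card_le_card_of_injOn _ _ hinj
      intro m hm
      rw [Finset.mem_coe, Finset.mem_filter]
      refine ⟨?_, content_cellOf _ _⟩
      have hmle : m ≤ min i j := by simpa using Nat.lt_succ_iff.mp (Finset.mem_range.mp hm)
      rw [YoungDiagram.mem_cells]
      have : cellOf (content (i, j)) (min i j) = (i, j) := cellOf_content_min (i, j)
      have h1 : (cellOf (content (i, j)) m).1 ≤ i := by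
        have := congrArg Prod.fst this; simp only [cellOf] at this ⊢; omega
      have h2 : (cellOf (content (i, j)) m).2 ≤ j := by
        have := congrArg Prod.snd this; simp only [cellOf] at this ⊢; omega
      have := YoungDiagram.up_left_mem Y h1 h2 (by simpa using hmem)
      simpa using this
    rw [Finset.card_range] at hle
    omega
  · intro hlt
    by_contra hnot
    have hle : (Y.cells.filter (fun p => content p = content (i, j))).card ≤
        (Finset.range (min i j)).card := by
      apply Finset.card_le_card_of_injOn (fun p => min p.1 p.2)
      · intro p hp
        rw [Finset.mem_coe, Finset.mem_filter] at hp
        obtain ⟨hpY, hpc⟩ := hp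
        rw [Finset.mem_coe, Finset.mem_range]
        by_contra hge
        push_neg at hge
        -- (i,j) = cellOf (content (i,j)) (min i j) ≤ p, so (i,j) ∈ Y
        have hpe : cellOf (content (i, j)) (min p.1 p.2) = p := by
          rw [← hpc]; exact cellOf_content_min p
        have h1 : i ≤ p.1 := by
          have e1 := congrArg Prod.fst (cellOf_content_min (i, j))
          have e2 := congrArg Prod.fst hpe
          simp only [cellOf] at e1 e2; omega
        have h2 : j ≤ p.2 := by
          have e1 := congrArg Prod.snd (cellOf_content_min (i, j))
          have e2 := congrArg Prod.snd hpe
          simp only [cellOf] at e1 e2; omega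
        rw [YoungDiagram.mem_cells] at hpY
        exact hnot (YoungDiagram.up_left_mem Y h1 h2 (by rwa [Prod.mk.eta]))
      · intro p hp q hq hpq
        rw [Finset.mem_coe, Finset.mem_filter] at hp hq
        dsimp only at hpq
        calc p = cellOf (content p) (min p.1 p.2) := (cellOf_content_min p).symm
          _ = cellOf (content q) (min q.1 q.2) := by rw [hp.2, hq.2, hpq]
          _ = q := cellOf_content_min q
    simp only [Finset.card_range] at hle
    omega

lemma youngDiagram_eq_of_contentMS_eq {Y Z : YoungDiagram} (h : contentMS Y = contentMS Z) :
    Y = Z := by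
  ext ⟨i, j⟩
  rw [YoungDiagram.mem_cells, YoungDiagram.mem_cells, mem_iff_min_lt_count,
    mem_iff_min_lt_count, h]

end MultipartitionAux

open MultipartitionAux in
/-- An `r`-multipartition is uniquely determined by the multiset of monomials
`q^{content} · Q_{component}` of its cells: the assignment `λ ↦ monomialMultiset λ`
is injective. -/
theorem multipartition_eq_of_monomialMultiset_eq {r : ℕ}
    (lam mu : Fin r → YoungDiagram)
    (h : monomialMultiset lam = monomialMultiset mu) : lam = mu := by
  rw [monomialMultiset_eq_map, monomialMultiset_eq_map] at h
  have hp : pairMS lam = pairMS mu := Multiset.map_injective singleExpnt_injective h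
  funext c
  apply youngDiagram_eq_of_contentMS_eq
  ext k
  rw [← count_pairMS lam c k, ← count_pairMS mu c k, hp]
end
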